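/- The function P*(θ) := 2/5 + (1/4)sin θ + (7/20)cos(2θ) + (1/4)sin(3θ) satisfies 0 ≤ P*(θ) ≤ 1 for all real θ. -/
import Mathlib

open Real

/-- The trigonometric polynomial
`P*(θ) = 2/5 + (1/4) sin θ + (7/20) cos(2θ) + (1/4) sin(3θ)` takes values in `[0,1]`. -/
theorem stmt12 (θ : ℝ) :
    (2 / 5 + (1 / 4) * Real.sin θ + (7 / 20) * Real.cos (2 * θ)
      + (1 / 4) * Real.sin (3 * θ)) ∈ Set.Icc (0 : ℝ) 1 := by
  have h2 : Real.cos (2 * θ) = 1 - 2 * Real.sin θ ^ 2 := by rw [Real.cos_two_mul', Real.cos_sq']; ring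
  have h3 : Real.sin (3 * θ) = 3 * Real.sin θ - 4 * Real.sin θ ^ 3 := Real.sin_three_mul θ
  set s := Real.sin θ with hs
  have h1 : -1 ≤ s := Real.neg_one_le_sin θ
  have h1' : s ≤ 1 := Real.sin_le_one θ
  rw [h2, h3]
  constructor
  · nlinarith [sq_nonneg (s + 6/7), sq_nonneg (s - 2/5), mul_nonneg (sub_nonneg.2 h1') (by linarith : (0:ℝ) ≤ s + 1), sq_nonneg (s*(s+6/7))]
  · nlinarith [sq_nonneg (s + 6/7), sq_nonneg (s - 2/5), mul_nonneg (sub_nonneg.2 h1') (by linarith : (0:ℝ) ≤ s + 1), sq_nonneg (s*(s-2/5))]
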